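/- Let F be an n × n matrix such that every row and every column of F contains exactly k nonzero entries, where k ≥ 1. Then there exist k permutations σ₁, …, σ_k of {1, …, n} whose graphs {(i, σ_t(i)) : 1 ≤ i ≤ n} are pairwise disjoint and whose union is exactly the set of positions of the nonzero entries of F; in particular the determinant expansion of F contains at least k nonzero terms (Theorem E of König). -/

import Mathlib

/-!
Read the nonzero pattern of `F` as a `k`-regular bipartite graph between rows and columns.
Double counting gives Hall's condition, so there is a perfect matching, i.e. a permutation `σ`
whose graph lies in the pattern. Deleting that graph leaves a `(k - 1)`-regular pattern, and
induction on `k` peels off the remaining permutations one at a time.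
-/

open Finset

section RegularRelation

variable {ι : Type*} [Fintype ι]

theorem card_le_card_filter_exists_rel {α : Type*} [Fintype α] (r : α → ι → Prop)
    [DecidableRel r] {k : ℕ} (hk : 0 < k) (hrow : ∀ i, k ≤ #{j | r i j})
    (hcol : ∀ j, #{i | r i j} ≤ k) (A : Finset α) :
    #A ≤ #{j | ∃ i ∈ A, r i j} := by
  refine Nat.le_of_mul_le_mul_right (card_mul_le_card_mul r (fun i hi => ?_) fun j _ => ?_) hk
  · refine (hrow i).trans (card_le_card fun j hj => ?_)
    simp only [mem_filter, mem_univ, true_and] at hj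
    simpa [bipartiteAbove] using ⟨⟨i, hi, hj⟩, hj⟩
  · exact (card_le_card (filter_subset_filter _ (subset_univ A))).trans (hcol j)

variable (r : ι → ι → Prop) [DecidableRel r]

theorem exists_perm_forall_rel {k : ℕ} (hk : 0 < k) (hrow : ∀ i, k ≤ #{j | r i j})
    (hcol : ∀ j, #{i | r i j} ≤ k) :
    ∃ σ : Equiv.Perm ι, ∀ i, r i (σ i) := by
  obtain ⟨f, hf, hrf⟩ := (Fintype.all_card_le_filter_rel_iff_exists_injective r).1
    (card_le_card_filter_exists_rel r hk hrow hcol)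
  exact ⟨Equiv.ofBijective f (Finite.injective_iff_bijective.1 hf), hrf⟩

variable [DecidableEq ι]

theorem card_filter_rel_and_ne_apply (σ : Equiv.Perm ι) (hσ : ∀ i, r i (σ i)) (i : ι) :
    #{j | r i j ∧ σ i ≠ j} = #{j | r i j} - 1 := by
  rw [filter_and, filter_ne, inter_erase, inter_univ, card_erase_of_mem (by simpa using hσ i)]

theorem card_filter_rel_and_apply_ne (σ : Equiv.Perm ι) (hσ : ∀ i, r i (σ i)) (j : ι) :
    #{i | r i j ∧ σ i ≠ j} = #{i | r i j} - 1 := by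
  have hne : ∀ i, σ i ≠ j ↔ i ≠ σ.symm j := fun i => σ.eq_symm_apply.symm.not
  simp_rw [hne]
  rw [filter_and, filter_ne', inter_erase, inter_univ, card_erase_of_mem]
  simpa using hσ (σ.symm j)

theorem exists_perms_partition_of_regular (k : ℕ)
    (hrow : ∀ i, #{j | r i j} = k) (hcol : ∀ j, #{i | r i j} = k) :
    ∃ σ : Fin k → Equiv.Perm ι,
      (∀ t i, r i (σ t i)) ∧ (∀ i j, r i j → ∃! t, σ t i = j) := by
  induction k generalizing r with
  | zero =>
    refine ⟨Fin.elim0, fun t => t.elim0, fun i j hij => ?_⟩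
    exact absurd hij (filter_eq_empty_iff.1 (card_eq_zero.1 (hrow i)) (mem_univ j))
  | succ k ih =>
    obtain ⟨σ₀, hσ₀⟩ := exists_perm_forall_rel r k.succ_pos (fun i => (hrow i).ge)
      (fun j => (hcol j).le)
    obtain ⟨σ, hσ, huniq⟩ := ih (fun i j => r i j ∧ σ₀ i ≠ j)
      (fun i => by rw [card_filter_rel_and_ne_apply r σ₀ hσ₀, hrow]; rfl)
      (fun j => by rw [card_filter_rel_and_apply_ne r σ₀ hσ₀, hcol]; rfl)
    refine ⟨Fin.cons σ₀ σ, Fin.cases hσ₀ fun t i => (hσ t i).1, fun i j hij => ?_⟩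
    by_cases h₀ : σ₀ i = j
    · exact ⟨0, h₀, Fin.cases (fun _ => rfl) fun t ht => absurd h₀ (ht ▸ (hσ t i).2)⟩
    · obtain ⟨t, ht, htu⟩ := huniq i j ⟨hij, h₀⟩
      exact ⟨t.succ, ht,
        Fin.cases (fun h => absurd h h₀) fun s hs => congrArg Fin.succ (htu s hs)⟩

end RegularRelation

theorem koenig_theorem_E {n : ℕ} {α : Type*} [Zero α] [DecidableEq α]
    (F : Matrix (Fin n) (Fin n) α) (k : ℕ)
    (hrow : ∀ i : Fin n, (Finset.univ.filter fun j => F i j ≠ 0).card = k)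
    (hcol : ∀ j : Fin n, (Finset.univ.filter fun i => F i j ≠ 0).card = k) :
    ∃ σ : Fin k → Equiv.Perm (Fin n),
      (∀ t : Fin k, ∀ i : Fin n, F i (σ t i) ≠ 0) ∧
      (∀ i j : Fin n, F i j ≠ 0 → ∃! t : Fin k, σ t i = j) := by
  -- instance search does not see through the `fun` in `DecidableRel`
  let : DecidableRel fun i j : Fin n => F i j ≠ 0 := fun _ _ => inferInstance
  exact exists_perms_partition_of_regular (fun i j => F i j ≠ 0) k hrow hcol
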